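/- arXiv:2011.07473 — 2 statements merged into one kernel-verified Lean document; each statement's English description precedes it below -/
import Mathlib

section
/- Let z ∈ ℂ satisfy Re(z) > 0, or Re(z) = 0 and Im(z) ≥ 0. Then the following chain of inequalities holds: |z − √(z²−1)| ≤ | |z| + √(|z|²−1) | ≤ |z + √(z²−1)| ≤ |z| + √(|z|²+1), where √(|z|²−1) denotes the principal complex square root of the real number |z|²−1 (which is purely imaginary when |z| < 1), and √(|z|²+1) is the real square root. -/
noncomputable def csqrt (z : ℂ) : ℂ := z ^ (1 / 2 : ℂ)

lemma csqrt_sq (w : ℂ) : (csqrt w) ^ 2 = w := by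
  have : (1/2 : ℂ) = ((2:ℕ):ℂ)⁻¹ := by norm_num
  rw [csqrt, this, Complex.cpow_nat_inv_pow w (by norm_num)]

lemma csqrt_re_im (w : ℂ) (hw : w ≠ 0) :
    (csqrt w).re = Real.exp (Real.log ‖w‖ / 2) * Real.cos (Complex.arg w / 2) ∧
    (csqrt w).im = Real.exp (Real.log ‖w‖ / 2) * Real.sin (Complex.arg w / 2) := by
  rw [csqrt, Complex.cpow_def_of_ne_zero hw]
  constructor
  · rw [Complex.exp_re]
    congr 1
    · congr 1; simp [Complex.log_re]; ring
    · congr 1; simp [Complex.log_im]; ring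
  · rw [Complex.exp_im]
    congr 1
    · congr 1; simp [Complex.log_re]; ring
    · congr 1; simp [Complex.log_im]; ring

lemma csqrt_re_nonneg (w : ℂ) : 0 ≤ (csqrt w).re := by
  rcases eq_or_ne w 0 with h | h
  · simp [csqrt, h, Complex.zero_cpow (by norm_num : (1/2:ℂ) ≠ 0)]
  · rw [(csqrt_re_im w h).1]
    apply mul_nonneg (Real.exp_nonneg _)
    apply Real.cos_nonneg_of_mem_Icc
    constructor
    · linarith [Complex.neg_pi_lt_arg w]
    · linarith [Complex.arg_le_pi w]

lemma csqrt_im_nonneg (w : ℂ) (hw : 0 ≤ w.im) : 0 ≤ (csqrt w).im := by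
  rcases eq_or_ne w 0 with h | h
  · simp [csqrt, h, Complex.zero_cpow (by norm_num : (1/2:ℂ) ≠ 0)]
  · rw [(csqrt_re_im w h).2]
    apply mul_nonneg (Real.exp_nonneg _)
    apply Real.sin_nonneg_of_nonneg_of_le_pi
    · linarith [Complex.arg_nonneg_iff.2 hw]
    · linarith [Complex.arg_le_pi w, Real.pi_pos]

lemma csqrt_im_nonpos (w : ℂ) (hw : w.im < 0) : (csqrt w).im ≤ 0 := by
  have h : w ≠ 0 := by intro h; rw [h] at hw; simp at hw
  rw [(csqrt_re_im w h).2]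
  apply mul_nonpos_of_nonneg_of_nonpos (Real.exp_nonneg _)
  apply Real.sin_nonpos_of_nonpos_of_neg_pi_le
  · linarith [Complex.arg_neg_iff.2 hw]
  · linarith [Complex.neg_pi_lt_arg w, Real.pi_pos]

set_option maxHeartbeats 2000000 in
/-- Lemma 4.1(i): if `Re z > 0`, or `Re z = 0` and `Im z ≥ 0`, then
`|z − √(z²−1)| ≤ ||z| + √(|z|²−1)| ≤ |z + √(z²−1)| ≤ |z| + √(|z|²+1)`. -/
theorem stmt0 (z : ℂ) (hz : 0 < z.re ∨ (z.re = 0 ∧ 0 ≤ z.im)) :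
    ‖z - csqrt (z ^ 2 - 1)‖ ≤
      ‖(‖z‖ : ℂ) + csqrt (((‖z‖ : ℝ) ^ 2 - 1 : ℝ) : ℂ)‖ ∧
    ‖(‖z‖ : ℂ) + csqrt (((‖z‖ : ℝ) ^ 2 - 1 : ℝ) : ℂ)‖ ≤
      ‖z + csqrt (z ^ 2 - 1)‖ ∧
    ‖z + csqrt (z ^ 2 - 1)‖ ≤
      ‖z‖ + Real.sqrt ((‖z‖) ^ 2 + 1) := by
  have hzre : 0 ≤ z.re := by rcases hz with h | h; exacts [le_of_lt h, le_of_eq h.1.symm]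
  obtain ⟨s, hsdef⟩ : ∃ w, csqrt (z ^ 2 - 1) = w := ⟨_, rfl⟩
  obtain ⟨t, htdef⟩ : ∃ w, csqrt (((‖z‖ : ℝ) ^ 2 - 1 : ℝ) : ℂ) = w := ⟨_, rfl⟩
  have hs2 : s ^ 2 = z ^ 2 - 1 := by rw [← hsdef]; exact csqrt_sq _
  have ht2 : t ^ 2 = (((‖z‖ : ℝ) ^ 2 - 1 : ℝ) : ℂ) := by
    rw [← htdef]; exact csqrt_sq _
  have hsre : 0 ≤ s.re := by rw [← hsdef]; exact csqrt_re_nonneg _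
  have htre : 0 ≤ t.re := by rw [← htdef]; exact csqrt_re_nonneg _
  rw [hsdef, htdef]
  set a : ℝ := ‖z‖ with ha
  have ha0 : 0 ≤ a := norm_nonneg z
  -- imaginary part of z^2 - 1
  have hwim : (z ^ 2 - 1).im = 2 * z.re * z.im := by
    simp [pow_two, Complex.mul_im]; ring
  -- cross term
  have hcross : 0 ≤ z.re * s.re + z.im * s.im := by
    rcases hz with hpos | ⟨h0, him⟩
    · rcases le_or_gt 0 z.im with h | h
      · have : 0 ≤ s.im := by
          rw [← hsdef]; exact csqrt_im_nonneg _ (by rw [hwim]; positivity)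
        have := mul_nonneg (le_of_lt hpos) hsre
        nlinarith
      · have : s.im ≤ 0 := by
          rw [← hsdef]; exact csqrt_im_nonpos _ (by rw [hwim]; nlinarith)
        have := mul_nonneg (le_of_lt hpos) hsre
        nlinarith
    · have : 0 ≤ s.im := by
        rw [← hsdef]
        exact csqrt_im_nonneg _ (by rw [hwim, h0]; ring_nf; exact le_refl 0)
      rw [h0]
      nlinarith
  -- abs quantities
  obtain ⟨X, hX⟩ : ∃ x, ‖z + s‖ = x := ⟨_, rfl⟩
  obtain ⟨V, hV⟩ : ∃ x, ‖z - s‖ = x := ⟨_, rfl⟩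
  rw [hX, hV]
  have hX0 : 0 ≤ X := hX ▸ norm_nonneg _
  have hV0 : 0 ≤ V := hV ▸ norm_nonneg _
  have huv : (z + s) * (z - s) = 1 := by linear_combination -hs2
  have hXV : X * V = 1 := by rw [← hX, ← hV, ← norm_mul, huv, norm_one]
  have hVX : V ≤ X := by
    rw [← hX, ← hV, Complex.norm_def, Complex.norm_def]
    apply Real.sqrt_le_sqrt
    simp only [Complex.normSq_apply, Complex.add_re, Complex.add_im, Complex.sub_re,
      Complex.sub_im]
    nlinarith
  have hX1 : 1 ≤ X := by nlinarith
  have hsum : 2 * a ≤ X + V := by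
    have h2z : (z + s) + (z - s) = 2 * z := by ring
    have : ‖2 * z‖ ≤ X + V := by
      rw [← h2z, ← hX, ← hV]; exact norm_add_le _ _
    rw [norm_mul] at this
    simpa using this
  -- structure of t
  have htim0 : t.re * t.im = 0 := by
    have h := congrArg Complex.im ht2
    rw [Complex.ofReal_im, pow_two, Complex.mul_im] at h
    linarith
  have htre2 : t.re ^ 2 - t.im ^ 2 = a ^ 2 - 1 := by
    have h := congrArg Complex.re ht2
    rw [Complex.ofReal_re, pow_two, Complex.mul_re] at h
    nlinarith
  obtain ⟨b, hb⟩ : ∃ x, ‖(a : ℂ) + t‖ = x := ⟨_, rfl⟩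
  rw [hb]
  have hb0 : 0 ≤ b := hb ▸ norm_nonneg _
  have hb2 : b ^ 2 = (a + t.re) ^ 2 + t.im ^ 2 := by
    rw [← hb, Complex.sq_norm, Complex.normSq_apply]
    simp only [Complex.add_re, Complex.add_im, Complex.ofReal_re, Complex.ofReal_im]
    ring
  clear hz hsdef htdef ht2 huv hwim hcross hsre hV hb
  have hb1 : 1 ≤ b ∧ b ≤ X := by
    rcases mul_eq_zero.1 htim0 with hre0 | him0
    · -- t.re = 0, so b = 1
      have hb2' : b ^ 2 = 1 := by
        linear_combination hb2 - htre2 + (2 * a + 2 * t.re) * hre0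
      have hz1 : (b - 1) * (b + 1) = 0 := by linear_combination hb2'
      have hbeq : b = 1 := by
        rcases mul_eq_zero.1 hz1 with h | h
        · linarith
        · linarith
      rw [hbeq]; exact ⟨le_refl 1, hX1⟩
    · -- t.im = 0, so b = a + t.re
      have hbeq : b = a + t.re := by
        have h1 : b ^ 2 = (a + t.re) ^ 2 := by rw [hb2, him0]; ring
        have h2 : (b - (a + t.re)) * (b + (a + t.re)) = 0 := by linear_combination h1
        rcases mul_eq_zero.1 h2 with h | h
        · linarith
        · have : 0 ≤ a + t.re := by linarith
          nlinarith
      have hre2 : t.re ^ 2 = a ^ 2 - 1 := by rw [← htre2, him0]; ring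
      have ha1 : 1 ≤ a := by nlinarith [sq_nonneg t.re, sq_nonneg (a - 1)]
      have hb1 : 1 ≤ b := by rw [hbeq]; linarith
      have hkey : b * (2 * a - b) = 1 := by rw [hbeq]; linear_combination -hre2
      have hbpos : 0 < b := lt_of_lt_of_le one_pos hb1
      have hc : 2 * a - b ≤ 1 := by nlinarith [hkey, hb1, hbpos]
      have hP : 0 ≤ (X - b) * (X - (2 * a - b)) := by
        nlinarith [mul_le_mul_of_nonneg_right hsum hX0, hXV, hkey]
      refine ⟨hb1, ?_⟩
      nlinarith [hP, hkey, hc, hX1, hb1,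
        mul_nonneg (sub_nonneg.2 hX1) (sub_nonneg.2 hb1)]
  refine ⟨?_, hb1.2, ?_⟩
  · -- V ≤ b
    nlinarith [hb1.1, mul_nonneg hV0 (sub_nonneg.2 hX1)]
  · -- X ≤ a + sqrt (a^2 + 1)
    have hs_abs : ‖s‖ ≤ Real.sqrt (a ^ 2 + 1) := by
      have h1 : ‖s‖ ^ 2 = ‖z ^ 2 - 1‖ := by
        rw [← norm_pow, hs2]
      have h2 : ‖z ^ 2 - 1‖ ≤ a ^ 2 + 1 := by
        have h3 := norm_add_le (z ^ 2) (-1)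
        simp only [← sub_eq_add_neg, norm_neg, norm_one, norm_pow] at h3
        exact h3
      have h4 : ‖s‖ ^ 2 ≤ a ^ 2 + 1 := h1 ▸ h2
      have := Real.sqrt_le_sqrt h4
      rwa [Real.sqrt_sq (norm_nonneg s)] at this
    have htri : X ≤ a + ‖s‖ := by
      rw [← hX]; exact norm_add_le z s
    linarith
end

section
/- Let x₋, x₊, ζ, y₊ be real numbers with x₋ ≤ x₊ < ζ, y₊ > 0, and y₊² ≥ (ζ − x₊)(ζ − x₋), and set d₀ = (ζ² − x₊² − y₊²)/(2(ζ − x₊)). Then the ellipse-area function S(d) = π (ζ − d)² y₊ / √((ζ − d)² − (x₊ − d)²) is well defined and strictly decreasing on the interval (−∞, d₀]; in particular S attains its minimum over this interval at d = d₀. -/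
/-- The area of the fat ellipse with center `d`, major semiaxis `ζ − d` and
minor semiaxis `(ζ − d)·y₊/√((ζ − d)² − (x₊ − d)²)` passing through `(ζ, 0)`
and `(x₊, y₊)`. -/
noncomputable def ellipseArea (xp ζ yp d : ℝ) : ℝ :=
  Real.pi * (ζ - d) ^ 2 * yp / Real.sqrt ((ζ - d) ^ 2 - (xp - d) ^ 2)

/-- Core polynomial inequality: `u ↦ u⁴/(2u − c)` is strictly increasing for `u ≥ c > 0`. -/
lemma ellipse_aux (c u1 u2 : ℝ) (hc : 0 < c) (h2 : c ≤ u2) (h12 : u2 < u1) :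
    u2 ^ 4 * (2 * u1 - c) < u1 ^ 4 * (2 * u2 - c) := by
  have hu2 : 0 < u2 := lt_of_lt_of_le hc h2
  have hu1 : 0 < u1 := hu2.trans h12
  have hcube : u2 ^ 3 < u1 ^ 3 := by
    exact pow_lt_pow_left₀ h12 hu2.le (by norm_num)
  have hS : 0 ≤ u1 ^ 3 + u1 ^ 2 * u2 + u1 * u2 ^ 2 + u2 ^ 3 := by positivity
  have hT : 0 < u1 ^ 3 + u1 ^ 2 * u2 + u1 * u2 ^ 2 - u2 ^ 3 := by
    have : 0 < u1 ^ 2 * u2 := by positivity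
    have : 0 < u1 * u2 ^ 2 := by positivity
    linarith
  have f1 : 0 ≤ (u1 - u2) * ((u2 - c) * (u1 ^ 3 + u1 ^ 2 * u2 + u1 * u2 ^ 2 + u2 ^ 3)) :=
    mul_nonneg (by linarith) (mul_nonneg (by linarith) hS)
  have f2 : 0 < (u1 - u2) * (u2 * (u1 ^ 3 + u1 ^ 2 * u2 + u1 * u2 ^ 2 - u2 ^ 3)) :=
    mul_pos (by linarith) (mul_pos hu2 hT)
  nlinarith [f1, f2]

/-- For `x₋ ≤ x₊ < ζ`, `y₊ > 0` and `y₊² ≥ (ζ − x₊)(ζ − x₋)`, with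
`d₀ = (ζ² − x₊² − y₊²)/(2(ζ − x₊))`: the area function `S` is well defined
(`(ζ − d)² − (x₊ − d)² > 0`) and strictly decreasing on `(−∞, d₀]`, and it
attains its minimum over this interval at `d = d₀`. -/
theorem stmt17 (xm xp ζ yp : ℝ) (h1 : xm ≤ xp) (h2 : xp < ζ) (hyp : 0 < yp)
    (hy : (ζ - xp) * (ζ - xm) ≤ yp ^ 2) :
    (∀ d ∈ Set.Iic ((ζ ^ 2 - xp ^ 2 - yp ^ 2) / (2 * (ζ - xp))),
      0 < (ζ - d) ^ 2 - (xp - d) ^ 2) ∧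
    StrictAntiOn (ellipseArea xp ζ yp)
      (Set.Iic ((ζ ^ 2 - xp ^ 2 - yp ^ 2) / (2 * (ζ - xp)))) ∧
    ∀ d ∈ Set.Iic ((ζ ^ 2 - xp ^ 2 - yp ^ 2) / (2 * (ζ - xp))),
      ellipseArea xp ζ yp ((ζ ^ 2 - xp ^ 2 - yp ^ 2) / (2 * (ζ - xp))) ≤
        ellipseArea xp ζ yp d := by
  have hc : 0 < ζ - xp := by linarith
  set d0 : ℝ := (ζ ^ 2 - xp ^ 2 - yp ^ 2) / (2 * (ζ - xp)) with hd0def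
  have hd0 : 2 * (ζ - xp) * d0 = ζ ^ 2 - xp ^ 2 - yp ^ 2 := by
    rw [hd0def]; field_simp
  have hyc : (ζ - xp) ^ 2 ≤ yp ^ 2 := le_trans (by nlinarith) hy
  have key : ∀ d ∈ Set.Iic d0,
      yp ^ 2 ≤ (ζ - d) ^ 2 - (xp - d) ^ 2 ∧ ζ - xp ≤ ζ - d := by
    intro d hd
    simp only [Set.mem_Iic] at hd
    have hmul : 2 * (ζ - xp) * d ≤ ζ ^ 2 - xp ^ 2 - yp ^ 2 := by
      calc 2 * (ζ - xp) * d ≤ 2 * (ζ - xp) * d0 :=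
            mul_le_mul_of_nonneg_left hd (by linarith)
        _ = ζ ^ 2 - xp ^ 2 - yp ^ 2 := hd0
    constructor
    · nlinarith
    · nlinarith
  have hpos : ∀ d ∈ Set.Iic d0, 0 < (ζ - d) ^ 2 - (xp - d) ^ 2 := by
    intro d hd
    have := (key d hd).1
    nlinarith
  have hanti : StrictAntiOn (ellipseArea xp ζ yp) (Set.Iic d0) := by
    intro d1 h1' d2 h2' h12
    obtain ⟨hk1, hu1⟩ := key d1 h1'
    obtain ⟨hk2, hu2⟩ := key d2 h2'
    have hQ1 : 0 < (ζ - d1) ^ 2 - (xp - d1) ^ 2 := hpos d1 h1'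
    have hQ2 : 0 < (ζ - d2) ^ 2 - (xp - d2) ^ 2 := hpos d2 h2'
    have hu1p : 0 < ζ - d1 := lt_of_lt_of_le hc hu1
    have hu2p : 0 < ζ - d2 := lt_of_lt_of_le hc hu2
    have hsq1 : 0 < Real.sqrt ((ζ - d1) ^ 2 - (xp - d1) ^ 2) := Real.sqrt_pos.2 hQ1
    have hsq2 : 0 < Real.sqrt ((ζ - d2) ^ 2 - (xp - d2) ^ 2) := Real.sqrt_pos.2 hQ2
    have hS1pos : 0 < ellipseArea xp ζ yp d1 := by
      unfold ellipseArea
      positivity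
    have haux := ellipse_aux (ζ - xp) (ζ - d1) (ζ - d2) hc hu2 (by linarith)
    have hK : 0 < Real.pi ^ 2 * yp ^ 2 * (ζ - xp) := by positivity
    have hmul := mul_lt_mul_of_pos_left haux hK
    have hsqlt : (ellipseArea xp ζ yp d2) ^ 2 < (ellipseArea xp ζ yp d1) ^ 2 := by
      unfold ellipseArea
      rw [div_pow, div_pow, Real.sq_sqrt hQ1.le, Real.sq_sqrt hQ2.le,
        div_lt_div_iff₀ hQ2 hQ1]
      calc (Real.pi * (ζ - d2) ^ 2 * yp) ^ 2 * ((ζ - d1) ^ 2 - (xp - d1) ^ 2)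
          = Real.pi ^ 2 * yp ^ 2 * (ζ - xp) *
            ((ζ - d2) ^ 4 * (2 * (ζ - d1) - (ζ - xp))) := by ring
        _ < Real.pi ^ 2 * yp ^ 2 * (ζ - xp) *
            ((ζ - d1) ^ 4 * (2 * (ζ - d2) - (ζ - xp))) := hmul
        _ = (Real.pi * (ζ - d1) ^ 2 * yp) ^ 2 * ((ζ - d2) ^ 2 - (xp - d2) ^ 2) := by ring
    exact lt_of_pow_lt_pow_left₀ 2 hS1pos.le hsqlt
  refine ⟨hpos, hanti, ?_⟩
  intro d hd
  rcases eq_or_lt_of_le (Set.mem_Iic.1 hd) with h | h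
  · rw [h]
  · exact (hanti hd Set.self_mem_Iic h).le
end
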